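/- Let d, L ≥ 1, let k_1,…,k_L ∈ ℝ^d be keys with K_max = max_i ‖k_i‖, let n ≤ L, and for a query q let A(q) denote the attention weights and τ*(q) the maximum of Σ_{i∈S} A_i(q) over all size-n subsets S. Suppose Ŝ ⊆ {1,…,L} contains some size-n subset S* that attains τ*(q). Then for any other query q': Σ_{i∈Ŝ} A_i(q') ≥ τ*(q') − 2 Σ_{i=1}^L |A_i(q') − A_i(q)|. In particular, if q and q' are unit vectors with ⟨q, q'⟩ ≥ τ for some τ ≤ 1, then Σ_{i∈Ŝ} A_i(q') ≥ τ*(q') − (4 K_max/√d) √(2 − 2τ), so the pre-hoc retained-mass gap of the shared (dilated) index set Ŝ is at most 2‖A(q') − A(q)‖₁ ≤ (4 K_max/√d)√(2 − 2τ). -/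

import Mathlib

open scoped RealInnerProductSpace

/-- Attention weights `A_i(q) = exp(⟨q,k_i⟩/√d) / ∑_j exp(⟨q,k_j⟩/√d)`. -/
noncomputable def attnWeight {d L : ℕ} (k : Fin L → EuclideanSpace ℝ (Fin d))
    (q : EuclideanSpace ℝ (Fin d)) (i : Fin L) : ℝ :=
  Real.exp (⟪q, k i⟫ / Real.sqrt d) / ∑ j, Real.exp (⟪q, k j⟫ / Real.sqrt d)

/-- The oracle retained mass `τ*(q)`: the maximum of `∑_{i∈S} A_i(q)` over
all subsets `S` of cardinality `n`. -/
noncomputable def oracleMass {d L : ℕ} (hL : 1 ≤ L) (n : ℕ) (hn : n ≤ L)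
    (k : Fin L → EuclideanSpace ℝ (Fin d)) (q : EuclideanSpace ℝ (Fin d)) : ℝ :=
  (Finset.univ.powersetCard n).sup'
    (Finset.powersetCard_nonempty.mpr (by simpa using hn))
    fun S => ∑ i ∈ S, attnWeight k q i

/-!
The mass of a fixed index set and the oracle mass `τ*` are both `1`-Lipschitz in the attention
vector for the `ℓ¹` distance, so carrying the oracle set of `q` over to `q'` costs at most
`2‖A(q') − A(q)‖₁`. Moving `q` to `q'` shifts every logit by at most
`ε = K_max ‖q' − q‖ / √d`, and shifting softmax logits by at most `ε` moves the weights by at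
most `2(1 − e^{−ε}) ≤ 2ε` in `ℓ¹`. For unit vectors, `‖q' − q‖² = 2 − 2⟪q, q'⟫`.
-/

open Finset Real

lemma abs_sum_sub_sum_le_sum_abs_sub {ι : Type*} [Fintype ι] (f g : ι → ℝ) (s : Finset ι) :
    |∑ i ∈ s, f i - ∑ i ∈ s, g i| ≤ ∑ i, |f i - g i| := by
  rw [← sum_sub_distrib]
  exact (abs_sum_le_sum_abs _ _).trans
    (sum_le_sum_of_subset_of_nonneg (subset_univ s) fun i _ _ => abs_nonneg _)

section Softmax

variable {ι : Type*} [Fintype ι]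

noncomputable def softmax (a : ι → ℝ) (i : ι) : ℝ :=
  exp (a i) / ∑ j, exp (a j)

lemma softmax_nonneg (a : ι → ℝ) (i : ι) : 0 ≤ softmax a i :=
  div_nonneg (exp_pos _).le (sum_nonneg fun _ _ => (exp_pos _).le)

lemma sum_softmax [Nonempty ι] (a : ι → ℝ) : ∑ i, softmax a i = 1 := by
  simp only [softmax, ← sum_div]
  exact div_self (sum_pos (fun _ _ => exp_pos _) univ_nonempty).ne'

lemma sum_abs_sub_eq_two_mul_sum_posPart {p q : ι → ℝ} (h : ∑ i, p i = ∑ i, q i) :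
    ∑ i, |p i - q i| = 2 * ∑ i, (p i - q i)⁺ := by
  have habs (x : ℝ) : |x| = 2 * x⁺ - x := by
    linarith [posPart_add_negPart x, posPart_sub_negPart x]
  simp only [habs, sum_sub_distrib, mul_sum, h, sub_self, sub_zero]

variable [Nonempty ι]

/-- Since the partition function of `b` is the smaller one, `e^{-ε} softmax a i ≤ softmax b i`
for every `i`. -/
lemma sum_posPart_softmax_sub_le {a b : ι → ℝ} {ε : ℝ} (hε : 0 ≤ ε)
    (hab : ∀ i, a i - b i ≤ ε) (hZ : ∑ j, exp (b j) ≤ ∑ j, exp (a j)) :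
    ∑ i, (softmax a i - softmax b i)⁺ ≤ 1 - exp (-ε) := by
  have hweight (i : ι) : (softmax a i - softmax b i)⁺ ≤ softmax a i * (1 - exp (-ε)) := by
    rw [posPart_def]
    refine sup_le ?_ (mul_nonneg (softmax_nonneg a i) (by simp [hε]))
    have hshift : softmax a i * exp (-ε) ≤ softmax b i := calc
      softmax a i * exp (-ε) = exp (a i - ε) / ∑ j, exp (a j) := by
        rw [softmax, sub_eq_add_neg, exp_add]; ring
      _ ≤ exp (b i) / ∑ j, exp (b j) := by
        gcongr
        linarith [hab i]
    linarith
  calc ∑ i, (softmax a i - softmax b i)⁺ ≤ ∑ i, softmax a i * (1 - exp (-ε)) :=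
        sum_le_sum fun i _ => hweight i
    _ = 1 - exp (-ε) := by rw [← sum_mul, sum_softmax, one_mul]

lemma sum_abs_softmax_sub_le {a b : ι → ℝ} {ε : ℝ} (hab : ∀ i, |a i - b i| ≤ ε) :
    ∑ i, |softmax a i - softmax b i| ≤ 2 * ε := by
  have hε : 0 ≤ ε := (abs_nonneg _).trans (hab (Classical.arbitrary ι))
  have hexp : 1 - exp (-ε) ≤ ε := by linarith [add_one_le_exp (-ε)]
  rcases le_total (∑ j, exp (b j)) (∑ j, exp (a j)) with hZ | hZ
  · rw [sum_abs_sub_eq_two_mul_sum_posPart (by rw [sum_softmax, sum_softmax])]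
    linarith [sum_posPart_softmax_sub_le hε (fun i => (abs_le.1 (hab i)).2) hZ]
  · simp_rw [abs_sub_comm (softmax a _)]
    rw [sum_abs_sub_eq_two_mul_sum_posPart (by rw [sum_softmax, sum_softmax])]
    have hba (i : ι) : b i - a i ≤ ε := by linarith [(abs_le.1 (hab i)).1]
    linarith [sum_posPart_softmax_sub_le hε hba hZ]

end Softmax

section Attention

variable {d L : ℕ} (k : Fin L → EuclideanSpace ℝ (Fin d))

lemma attnWeight_eq_softmax (q : EuclideanSpace ℝ (Fin d)) :
    attnWeight k q = softmax fun i => ⟪q, k i⟫ / √d := rfl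

lemma oracleMass_le_add_sum_abs_sub (hL : 1 ≤ L) {n : ℕ} (hn : n ≤ L)
    (q q' : EuclideanSpace ℝ (Fin d)) :
    oracleMass hL n hn k q' ≤
      oracleMass hL n hn k q + ∑ i, |attnWeight k q' i - attnWeight k q i| := by
  refine sup'_le _ _ fun S hS => ?_
  have hS_le : ∑ i ∈ S, attnWeight k q i ≤ oracleMass hL n hn k q :=
    le_sup' (fun S => ∑ i ∈ S, attnWeight k q i) hS
  linarith [(abs_le.1 (abs_sum_sub_sum_le_sum_abs_sub (attnWeight k q') (attnWeight k q) S)).2]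

lemma oracleMass_sub_le_sum_attnWeight (hL : 1 ≤ L) {n : ℕ} (hn : n ≤ L)
    {q : EuclideanSpace ℝ (Fin d)} (q' : EuclideanSpace ℝ (Fin d)) {S Shat : Finset (Fin L)}
    (hS : S ⊆ Shat) (hSq : ∑ i ∈ S, attnWeight k q i = oracleMass hL n hn k q) :
    oracleMass hL n hn k q' - 2 * ∑ i, |attnWeight k q' i - attnWeight k q i| ≤
      ∑ i ∈ Shat, attnWeight k q' i := by
  have hS_mass := (abs_le.1 (abs_sum_sub_sum_le_sum_abs_sub
    (attnWeight k q') (attnWeight k q) S)).1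
  have hS_Shat : ∑ i ∈ S, attnWeight k q' i ≤ ∑ i ∈ Shat, attnWeight k q' i :=
    sum_le_sum_of_subset_of_nonneg hS fun i _ _ =>
      attnWeight_eq_softmax k q' ▸ softmax_nonneg _ i
  linarith [oracleMass_le_add_sum_abs_sub k hL hn q q']

lemma sum_abs_attnWeight_sub_le [NeZero L] {K : ℝ} (hK : ∀ i, ‖k i‖ ≤ K)
    (q q' : EuclideanSpace ℝ (Fin d)) :
    ∑ i, |attnWeight k q' i - attnWeight k q i| ≤ 2 * (K * ‖q' - q‖ / √d) := by
  refine sum_abs_softmax_sub_le fun i => ?_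
  rw [← sub_div, ← inner_sub_left, abs_div, abs_of_nonneg (sqrt_nonneg _)]
  gcongr
  calc |⟪q' - q, k i⟫| ≤ ‖q' - q‖ * ‖k i‖ := abs_real_inner_le_norm _ _
    _ ≤ K * ‖q' - q‖ := by rw [mul_comm]; gcongr; exact hK i

end Attention

lemma norm_sub_le_sqrt_of_le_inner {E : Type*} [NormedAddCommGroup E] [InnerProductSpace ℝ E]
    {q q' : E} {τ : ℝ} (hq : ‖q‖ = 1) (hq' : ‖q'‖ = 1) (hτ : τ ≤ ⟪q, q'⟫) :
    ‖q' - q‖ ≤ √(2 - 2 * τ) := by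
  rw [← sqrt_sq (norm_nonneg _), norm_sub_sq_real, hq, hq', real_inner_comm]
  gcongr
  linarith

theorem prehoc_retained_mass_gap_general (d L : ℕ) (hL : 1 ≤ L)
    (k : Fin L → EuclideanSpace ℝ (Fin d)) (Kmax : ℝ)
    (hK : Kmax = Finset.univ.sup' (Finset.univ_nonempty_iff.mpr ⟨⟨0, hL⟩⟩)
      fun i => ‖k i‖)
    (n : ℕ) (hn : n ≤ L)
    (q q' : EuclideanSpace ℝ (Fin d))
    (Shat : Finset (Fin L))
    (hShat : ∃ Sstar : Finset (Fin L), Sstar ⊆ Shat ∧ Sstar.card = n ∧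
      ∑ i ∈ Sstar, attnWeight k q i = oracleMass hL n hn k q)
    (τ : ℝ) :
    (∑ i ∈ Shat, attnWeight k q' i ≥
      oracleMass hL n hn k q' - 2 * ∑ i, |attnWeight k q' i - attnWeight k q i|) ∧
    (‖q‖ = 1 → ‖q'‖ = 1 → τ ≤ ⟪q, q'⟫ →
      (∑ i ∈ Shat, attnWeight k q' i ≥
        oracleMass hL n hn k q' - 4 * Kmax / Real.sqrt d * Real.sqrt (2 - 2 * τ)) ∧
      2 * ∑ i, |attnWeight k q' i - attnWeight k q i| ≤
        4 * Kmax / Real.sqrt d * Real.sqrt (2 - 2 * τ)) := by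
  obtain ⟨S, hS, -, hSq⟩ := hShat
  have hgap := oracleMass_sub_le_sum_attnWeight k hL hn q' hS hSq
  refine ⟨hgap, fun hq hq' hτ => ?_⟩
  have : NeZero L := ⟨by omega⟩
  have hKi (i : Fin L) : ‖k i‖ ≤ Kmax := hK ▸ le_sup' (fun i => ‖k i‖) (mem_univ i)
  have hK0 : 0 ≤ Kmax := (norm_nonneg _).trans (hKi 0)
  have hl1 : 2 * ∑ i, |attnWeight k q' i - attnWeight k q i| ≤
      4 * Kmax / √d * √(2 - 2 * τ) := calc
    _ ≤ 2 * (2 * (Kmax * ‖q' - q‖ / √d)) := by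
      gcongr; exact sum_abs_attnWeight_sub_le k hKi q q'
    _ ≤ 2 * (2 * (Kmax * √(2 - 2 * τ) / √d)) := by
      gcongr; exact norm_sub_le_sqrt_of_le_inner hq hq' hτ
    _ = 4 * Kmax / √d * √(2 - 2 * τ) := by ring
  exact ⟨by linarith, hl1⟩

/-- if the shared (dilated) index set `Ŝ` contains a size-`n` set `S*`
attaining the oracle mass `τ*(q)`, then for any other query `q'`,
`∑_{i∈Ŝ} A_i(q') ≥ τ*(q') − 2‖A(q')−A(q)‖₁`; in particular, for unit queries with
`⟨q,q'⟩ ≥ τ`, the pre-hoc retained-mass gap is at most `(4 K_max/√d)√(2−2τ)`. -/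
theorem prehoc_retained_mass_gap (d L : ℕ) (hd : 1 ≤ d) (hL : 1 ≤ L)
    (k : Fin L → EuclideanSpace ℝ (Fin d)) (Kmax : ℝ)
    (hK : Kmax = Finset.univ.sup' (Finset.univ_nonempty_iff.mpr ⟨⟨0, hL⟩⟩)
      fun i => ‖k i‖)
    (n : ℕ) (hn : n ≤ L)
    (q q' : EuclideanSpace ℝ (Fin d))
    (Shat : Finset (Fin L))
    (hShat : ∃ Sstar : Finset (Fin L), Sstar ⊆ Shat ∧ Sstar.card = n ∧
      ∑ i ∈ Sstar, attnWeight k q i = oracleMass hL n hn k q)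
    (τ : ℝ) (hτ : τ ≤ 1) :
    (∑ i ∈ Shat, attnWeight k q' i ≥
      oracleMass hL n hn k q' - 2 * ∑ i, |attnWeight k q' i - attnWeight k q i|) ∧
    (‖q‖ = 1 → ‖q'‖ = 1 → τ ≤ ⟪q, q'⟫ →
      (∑ i ∈ Shat, attnWeight k q' i ≥
        oracleMass hL n hn k q' - 4 * Kmax / Real.sqrt d * Real.sqrt (2 - 2 * τ)) ∧
      2 * ∑ i, |attnWeight k q' i - attnWeight k q i| ≤
        4 * Kmax / Real.sqrt d * Real.sqrt (2 - 2 * τ)) :=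
  prehoc_retained_mass_gap_general d L hL k Kmax hK n hn q q' Shat hShat τ
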